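/- Let ⟨z x y z'⟩ be a good quartet in the BMG G(T,σ), i.e., zx, xy, yz' are edges, (z,y), (z',x) are arcs, and (y,z), (x,z') are not arcs, with σ(z)=σ(z'). Then for u := lca_T(x,y,z,z') there are two distinct children v₁, v₂ of u with x, z ⪯ v₁ and y, z' ⪯ v₂; in particular u = lca_T(x,y) and σ(z) ∈ σ(L(T(v₁))) ∩ σ(L(T(v₂))), so S∩(x,y) ≠ ∅. -/
import Mathlib


/-- A finite rooted tree, given by a parent function: every vertex reaches the
root along the parent chain. -/
structure PTree (V : Type*) where
  parent : V → Option V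
  root : V
  root_parent : parent root = none
  connected : ∀ v : V, Relation.ReflTransGen (fun a b => parent a = some b) v root

namespace PTree

variable {V C : Type*}

/-- `T.anc a b` : `b` is an ancestor of `a` (i.e. `a ⪯ b` in the ancestor order). -/
def anc (T : PTree V) (a b : V) : Prop :=
  Relation.ReflTransGen (fun x y => T.parent x = some y) a b

/-- `v` is a child of `u`. -/
def child (T : PTree V) (v u : V) : Prop := T.parent v = some u

/-- A leaf is a vertex without children. -/
def isLeaf (T : PTree V) (v : V) : Prop := ∀ w, ¬ T.child w v

/-- `u` is the last common ancestor of `x` and `y`. -/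
def isLCA (T : PTree V) (u x y : V) : Prop :=
  T.anc x u ∧ T.anc y u ∧ ∀ w, T.anc x w → T.anc y w → T.anc u w

/-- `σ(L(T(v)))` : the set of colors of the leaves of the subtree rooted at `v`. -/
def leafColors (T : PTree V) (σ : V → C) (v : V) : Set C :=
  {c | ∃ x, T.isLeaf x ∧ T.anc x v ∧ σ x = c}

/-- `y` is a best match of `x` in `(T,σ)`. -/
def bestMatch (T : PTree V) (σ : V → C) (x y : V) : Prop :=
  T.isLeaf x ∧ T.isLeaf y ∧ σ x ≠ σ y ∧
    ∀ y', T.isLeaf y' → σ y' = σ y →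
      ∀ u u', T.isLCA u x y → T.isLCA u' x y' → T.anc u u'

/-- `x` and `y` are reciprocal best matches, i.e. `xy` is an edge of the BMG `G(T,σ)`. -/
def edge (T : PTree V) (σ : V → C) (x y : V) : Prop :=
  T.bestMatch σ x y ∧ T.bestMatch σ y x

/-- Every inner vertex (other than the planted root) has exactly two children. -/
def Binary (T : PTree V) : Prop :=
  ∀ u : V, u ≠ T.root → ¬ T.isLeaf u →
    ∃ v₁ v₂, v₁ ≠ v₂ ∧ T.child v₁ u ∧ T.child v₂ u ∧
      ∀ w, T.child w u → w = v₁ ∨ w = v₂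

/-- Adjacency in the color-set intersection graph `𝔠_T(u)`. -/
def csiAdj (T : PTree V) (σ : V → C) (u a b : V) : Prop :=
  a ≠ b ∧ T.child a u ∧ T.child b u ∧ (T.leafColors σ a ∩ T.leafColors σ b).Nonempty

/-- `a` and `b` lie in the same connected component of `𝔠_T(u)`. -/
def sameComp (T : PTree V) (σ : V → C) (u a b : V) : Prop :=
  Relation.ReflTransGen (T.csiAdj σ u) a b

/-- `S` is a connected component of `𝔠_T(u)` with more than one element. -/
def IsBigComp (T : PTree V) (σ : V → C) (u : V) (S : Set V) : Prop :=
  (∃ a, T.child a u ∧ S = {b | T.sameComp σ u a b}) ∧ ∃ a ∈ S, ∃ b ∈ S, a ≠ b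

end PTree

/-- `(T, σT)` explains the colored digraph `(E, σ)` on the gene set `L`, with
`ι` identifying the genes with the leaves of `T`. -/
def Explains {V L C : Type*} (T : PTree V) (ι : L → V) (σT : V → C) (σ : L → C)
    (E : L → L → Prop) : Prop :=
  Function.Injective ι ∧ (∀ l, T.isLeaf (ι l)) ∧ (∀ v, T.isLeaf v → ∃ l, ι l = v) ∧
    (∀ l, σT (ι l) = σ l) ∧ ∀ x y, E x y ↔ T.bestMatch σT (ι x) (ι y)

/-- The parent function after contracting the edge `uv` (with `v` a child of `u`). -/
def contractedParent {V : Type*} [DecidableEq V] (T : PTree V) (u v w : V) : Option V :=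
  (T.parent w).map (fun p => if p = v then u else p)

/-- One step towards the contracted parent when contracting all edges whose lower
endpoints form the set `A`. -/
def multiContractStep {V : Type*} (T : PTree V) (A : Set V) (a b : V) : Prop :=
  T.parent a = some b ∧ b ∈ A

/-- Event types for inner vertices of an event-labeled gene tree. -/
inductive Event : Type
  | speciation
  | duplication

namespace PTree

variable {V : Type*} {T : PTree V}

theorem anc_refl (a : V) : T.anc a a := Relation.ReflTransGen.refl

theorem anc_trans {a b c : V} (h : T.anc a b) (h' : T.anc b c) : T.anc a c :=
  Relation.ReflTransGen.trans h h'

theorem anc_head {a b c : V} (h : T.parent a = some b) (h' : T.anc b c) : T.anc a c :=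
  Relation.ReflTransGen.head h h'

theorem anc_of_child {a b : V} (h : T.child a b) : T.anc a b :=
  Relation.ReflTransGen.single h

theorem anc_root (a : V) : T.anc a T.root := T.connected a

theorem eq_root_of_anc {a : V} (h : T.anc T.root a) : a = T.root := by
  rcases Relation.ReflTransGen.cases_head h with h | ⟨c, hc, _⟩
  · exact h.symm
  · rw [T.root_parent] at hc; cases hc

theorem no_self_parent (v : V) : T.parent v ≠ some v := by
  have h := T.connected v
  induction h using Relation.ReflTransGen.head_induction_on with
  | refl => rw [T.root_parent]; simp
  | @head a c h' hcr ih =>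
    intro hav
    rw [hav] at h'
    obtain rfl : a = c := by injection h'
    exact ih hav

theorem anc_antisymm : ∀ {a b : V}, T.anc a b → T.anc b a → a = b := by
  intro a
  have h := T.connected a
  induction h using Relation.ReflTransGen.head_induction_on with
  | refl =>
    intro b hb hb'
    exact (eq_root_of_anc hb).symm
  | @head a p h' hpr ih =>
    intro b hab hba
    rcases Relation.ReflTransGen.cases_head hab with h | ⟨c, hc, hcb⟩
    · exact h
    · rw [h'] at hc
      obtain rfl : p = c := by injection hc
      have hbp : T.anc b p := hba.trans (Relation.ReflTransGen.single h')
      have hpb : p = b := ih hcb hbp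
      subst hpb
      exact (ih hba (Relation.ReflTransGen.single h')).symm

/-- any two ancestors of `x` are comparable -/
theorem anc_comparable {x a b : V} (ha : T.anc x a) (hb : T.anc x b) :
    T.anc a b ∨ T.anc b a := by
  induction ha using Relation.ReflTransGen.head_induction_on with
  | refl => exact Or.inl hb
  | @head w c h' hca ih =>
    rcases Relation.ReflTransGen.cases_head hb with h | ⟨c', hc', hc'b⟩
    · subst h
      exact Or.inr (anc_head h' hca)
    · rw [h'] at hc'
      obtain rfl : c = c' := by injection hc'
      exact ih hc'b

theorem anc_cases_child {w u : V} (h : T.anc w u) :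
    w = u ∨ ∃ c, T.child c u ∧ T.anc w c := by
  induction h using Relation.ReflTransGen.head_induction_on with
  | refl => exact Or.inl rfl
  | @head v c h' hcu ih =>
    rcases ih with rfl | ⟨c', hc', hcc'⟩
    · exact Or.inr ⟨v, h', anc_refl v⟩
    · exact Or.inr ⟨c', hc', anc_head h' hcc'⟩

/-- a proper descendant of `u` lies below some child of `u` -/
theorem exists_child_above {w u : V} (h : T.anc w u) (hne : w ≠ u) :
    ∃ c, T.child c u ∧ T.anc w c :=
  (anc_cases_child h).resolve_left hne

/-- the child of `u` above a given vertex `x` is unique -/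
theorem child_above_unique {x u c₁ c₂ : V} (h₁ : T.child c₁ u) (h₂ : T.child c₂ u)
    (hx₁ : T.anc x c₁) (hx₂ : T.anc x c₂) : c₁ = c₂ := by
  have hne : ∀ {a b : V}, T.child a u → T.child b u → T.anc a b → a = b := by
    intro a b hau hbu hab
    rcases Relation.ReflTransGen.cases_head hab with h | ⟨c, hc, hcb⟩
    · exact h
    · rw [hau] at hc
      obtain rfl : u = c := by injection hc
      have : u = b := anc_antisymm hcb (anc_of_child hbu)
      subst this
      exact absurd hbu (no_self_parent _)
  rcases anc_comparable hx₁ hx₂ with h | h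
  · exact hne h₁ h₂ h
  · exact (hne h₂ h₁ h).symm

theorem child_ne {c u : V} (h : T.child c u) : c ≠ u := by
  rintro rfl; exact no_self_parent c h

theorem lca_exists (a b : V) : ∃ m, T.isLCA m a b := by
  have h := T.connected a
  induction h using Relation.ReflTransGen.head_induction_on with
  | refl =>
    exact ⟨T.root, anc_refl _, anc_root b, fun v hv _ => hv⟩
  | @head w p h' hpr ih =>
    by_cases hbw : T.anc b w
    · exact ⟨w, anc_refl w, hbw, fun v hv _ => hv⟩
    · obtain ⟨m, hm1, hm2, hm3⟩ := ih
      refine ⟨m, anc_head h' hm1, hm2, ?_⟩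
      intro v hv hbv
      rcases Relation.ReflTransGen.cases_head hv with h | ⟨c, hc, hcv⟩
      · subst h; exact absurd hbv hbw
      · rw [h'] at hc
        obtain rfl : p = c := by injection hc
        exact hm3 v hcv hbv

end PTree

/-- For a good quartet `⟨z x y z'⟩` in `G(T,σ)`, the vertex
`u = lca(x,y,z,z')` has two distinct children `v₁, v₂` with `x, z ⪯ v₁` and
`y, z' ⪯ v₂`; in particular `u = lca(x,y)` and
`σ(z) ∈ σ(L(T(v₁))) ∩ σ(L(T(v₂)))`, so `S∩(x,y) ≠ ∅`. -/
theorem stmt_10 {V C : Type*} [Fintype V] (T : PTree V) (σ : V → C)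
    (x y z z' u : V)
    (hcol : σ z = σ z') (hxy : σ x ≠ σ y) (hxz : σ x ≠ σ z) (hyz : σ y ≠ σ z)
    (he1 : T.edge σ z x) (he2 : T.edge σ x y) (he3 : T.edge σ y z')
    (ha1 : T.bestMatch σ z y) (ha2 : T.bestMatch σ z' x)
    (hn1 : ¬ T.bestMatch σ y z) (hn2 : ¬ T.bestMatch σ x z')
    (hu : T.anc x u ∧ T.anc y u ∧ T.anc z u ∧ T.anc z' u ∧
      ∀ w, T.anc x w → T.anc y w → T.anc z w → T.anc z' w → T.anc u w) :
    ∃ v₁ v₂, v₁ ≠ v₂ ∧ T.child v₁ u ∧ T.child v₂ u ∧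
      T.anc x v₁ ∧ T.anc z v₁ ∧ T.anc y v₂ ∧ T.anc z' v₂ ∧
      T.isLCA u x y ∧ σ z ∈ T.leafColors σ v₁ ∩ T.leafColors σ v₂ := by
  obtain ⟨hxu, hyu, hzu, hz'u, humin⟩ := hu
  obtain ⟨hzleaf, hxleaf, _, _⟩ := he1.1
  obtain ⟨_, hyleaf, _, _⟩ := he2.1
  obtain ⟨_, hz'leaf, _, _⟩ := he3.1
  -- from ¬ bestMatch x z' extract a witness
  have H2 : ¬ ∀ y', T.isLeaf y' → σ y' = σ z' → ∀ q q', T.isLCA q x z' → T.isLCA q' x y' →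
      T.anc q q' := fun h => hn2 ⟨hxleaf, hz'leaf, fun he => hxz (he.trans hcol.symm), h⟩
  push_neg at H2
  obtain ⟨y', hy'leaf, hy'col, q, q', hq, hq', hqq'⟩ := H2
  -- from ¬ bestMatch y z extract a witness
  have H1 : ¬ ∀ w', T.isLeaf w' → σ w' = σ z → ∀ q q', T.isLCA q y z → T.isLCA q' y w' →
      T.anc q q' := fun h => hn1 ⟨hyleaf, hzleaf, hyz, h⟩
  push_neg at H1
  obtain ⟨w', hw'leaf, hw'col, q₂, q₂', hq₂, hq₂', hq₂q₂'⟩ := H1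
  -- p = lca(x,z)
  obtain ⟨p, hp⟩ := PTree.lca_exists (T := T) x z
  have hpq' : T.anc p q' :=
    he1.2.2.2.2 y' hy'leaf (hy'col.trans hcol.symm) p q' hp hq'
  have hq'q : T.anc q' q := by
    rcases PTree.anc_comparable hq.1 hq'.1 with h | h
    · exact absurd h hqq'
    · exact h
  have hnqp : ¬ T.anc q p := fun h => hqq' (h.trans hpq')
  have hpu : T.anc p u := hp.2.2 u hxu hzu
  have hqu : T.anc q u := hq.2.2 u hxu hz'u
  have hpne : p ≠ u := by rintro rfl; exact hnqp hqu
  obtain ⟨c₁, hc₁, hpc₁⟩ := PTree.exists_child_above hpu hpne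
  have hxc₁ : T.anc x c₁ := hp.1.trans hpc₁
  have hzc₁ : T.anc z c₁ := hp.2.1.trans hpc₁
  -- r = lca(y,z')
  obtain ⟨r, hr⟩ := PTree.lca_exists (T := T) y z'
  have hrq₂' : T.anc r q₂' :=
    he3.1.2.2.2 w' hw'leaf (hw'col.trans hcol) r q₂' hr hq₂'
  have hq₂'q₂ : T.anc q₂' q₂ := by
    rcases PTree.anc_comparable hq₂.1 hq₂'.1 with h | h
    · exact absurd h hq₂q₂'
    · exact h
  have hnq₂r : ¬ T.anc q₂ r := fun h => hq₂q₂' (h.trans hrq₂')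
  have hru : T.anc r u := hr.2.2 u hyu hz'u
  have hq₂u : T.anc q₂ u := hq₂.2.2 u hyu hzu
  have hrne : r ≠ u := by rintro rfl; exact hnq₂r hq₂u
  obtain ⟨c₂, hc₂, hrc₂⟩ := PTree.exists_child_above hru hrne
  have hyc₂ : T.anc y c₂ := hr.1.trans hrc₂
  have hz'c₂ : T.anc z' c₂ := hr.2.1.trans hrc₂
  -- the two children are distinct
  have hcc : c₁ ≠ c₂ := by
    rintro rfl
    have : T.anc u c₁ := humin c₁ hxc₁ hyc₂ hzc₁ hz'c₂
    exact PTree.child_ne hc₁ (PTree.anc_antisymm (PTree.anc_of_child hc₁) this)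
  refine ⟨c₁, c₂, hcc, hc₁, hc₂, hxc₁, hzc₁, hyc₂, hz'c₂, ⟨hxu, hyu, ?_⟩,
    ⟨z, hzleaf, hzc₁, rfl⟩, ⟨z', hz'leaf, hz'c₂, hcol.symm⟩⟩
  intro w hxw hyw
  rcases PTree.anc_comparable hxu hxw with h | h
  · exact h
  · by_cases hwu : w = u
    · subst hwu; exact Relation.ReflTransGen.refl
    obtain ⟨c, hc, hwc⟩ := PTree.exists_child_above h hwu
    have e₁ : c = c₁ := PTree.child_above_unique hc hc₁ (hxw.trans hwc) hxc₁
    have e₂ : c = c₂ := PTree.child_above_unique hc hc₂ (hyw.trans hwc) hyc₂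
    exact absurd (e₁ ▸ e₂) hcc
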